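/- Let G be a graph with minimum degree δ(G) ≥ 1 and H any graph. Then ⌈(Δ(G)+1)·|V(H)|/2⌉ ≤ χ_{×2}(G∘H) ≤ χ_{×2}(G)·|V(H)|. -/

import Mathlib

open SimpleGraph

/-- The closed neighborhood `N[v]` of a vertex. -/
def closedNbhd {V : Type*} (G : SimpleGraph V) (v : V) : Set V :=
  insert v (G.neighborSet v)

/-- `B` is a `k`-limited packing: every closed neighborhood contains at most `k` vertices of `B`. -/
def IsLimitedPacking {V : Type*} (G : SimpleGraph V) (k : ℕ) (B : Set V) : Prop :=
  ∀ v : V, (B ∩ closedNbhd G v).ncard ≤ k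

/-- `P` is a partition of the vertex set of `G` into `k`-limited packing sets. -/
def IsLPPartition {V : Type*} (G : SimpleGraph V) (k : ℕ) (P : Finset (Set V)) : Prop :=
  (∀ B ∈ P, IsLimitedPacking G k B) ∧ (∀ v : V, ∃! B : Set V, B ∈ P ∧ v ∈ B)

/-- The `k`-limited packing partition number `χ_{×k}(G)`: minimum number of parts in a
partition of the vertex set into `k`-limited packing sets. -/
noncomputable def chiLP {V : Type*} (G : SimpleGraph V) (k : ℕ) : ℕ :=
  sInf {n | ∃ P : Finset (Set V), IsLPPartition G k P ∧ P.card = n}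

/-- The lexicographic product `G ∘ H` of two simple graphs. -/
def lexProd {V W : Type*} (G : SimpleGraph V) (H : SimpleGraph W) : SimpleGraph (V × W) where
  Adj x y := G.Adj x.1 y.1 ∨ (x.1 = y.1 ∧ H.Adj x.2 y.2)
  symm := by
    constructor
    rintro ⟨a, b⟩ ⟨c, d⟩ (h | ⟨h1, h2⟩)
    · exact Or.inl h.symm
    · exact Or.inr ⟨h1.symm, h2.symm⟩
  loopless := by
    constructor
    rintro ⟨a, b⟩ (h | ⟨h1, h2⟩)
    · exact G.ne_of_adj h rfl
    · exact H.ne_of_adj h2 rfl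

/-!
The upper bound: if `P` partitions `G` into 2-limited packings, the layers `B × {w}` (`B ∈ P`,
`w ∈ V(H)`) partition `G ∘ H` into 2-limited packings, since the closed neighbourhood of `(u, w')`
meets the layer `V(G) × {w}` only over `N[u]`.

The lower bound: let `v` have maximum degree and a neighbour `y`. Any three vertices of
`N[v] × V(H)` have a common closed neighbour in `G ∘ H`, so every 2-limited packing meets this
set of `(Δ(G) + 1)|V(H)|` vertices at most twice.
-/

open Finset

section LimitedPacking

variable {V : Type*} {G : SimpleGraph V} {k : ℕ}

lemma exists_isLPPartition [Fintype V] (G : SimpleGraph V) (hk : 1 ≤ k) :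
    ∃ P : Finset (Set V), IsLPPartition G k P := by
  classical
  refine ⟨univ.image fun v => ({v} : Set V), ?_, fun v => ⟨{v}, ⟨by simp, rfl⟩, ?_⟩⟩
  · simp only [mem_image, mem_univ, true_and, forall_exists_index, forall_apply_eq_imp_iff]
    exact fun u w =>
      (Set.ncard_le_ncard Set.inter_subset_left (Set.finite_singleton u)).trans
        ((Set.ncard_singleton u).trans_le hk)
  · rintro B ⟨hB, hvB⟩
    obtain ⟨u, -, rfl⟩ := mem_image.mp hB
    rw [Set.mem_singleton_iff.mp hvB]

lemma chiLP_le_card {P : Finset (Set V)} (hP : IsLPPartition G k P) : chiLP G k ≤ P.card :=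
  Nat.sInf_le ⟨P, hP, rfl⟩

lemma exists_isLPPartition_card_eq_chiLP [Fintype V] (G : SimpleGraph V) (hk : 1 ≤ k) :
    ∃ P : Finset (Set V), IsLPPartition G k P ∧ P.card = chiLP G k := by
  obtain ⟨P, hP⟩ := exists_isLPPartition G hk
  exact Nat.sInf_mem (s := {n | ∃ P, IsLPPartition G k P ∧ P.card = n}) ⟨P.card, P, hP, rfl⟩

open scoped Classical in
lemma IsLimitedPacking.card_filter_mem_le [Finite V] {B : Set V}
    (hB : IsLimitedPacking G k B) {T : Finset V}
    (hT : ∀ S ⊆ T, S.card = k + 1 → ∃ z, ↑S ⊆ closedNbhd G z) :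
    (T.filter (· ∈ B)).card ≤ k := by
  by_contra! hlarge
  obtain ⟨S, hST, hS⟩ := exists_subset_card_eq (Nat.succ_le_of_lt hlarge)
  obtain ⟨z, hz⟩ := hT S (hST.trans (filter_subset _ _)) hS
  have hSB : ↑S ⊆ B ∩ closedNbhd G z := fun x hx =>
    ⟨(mem_filter.mp (hST hx)).2, hz hx⟩
  have := (Set.ncard_le_ncard hSB (Set.toFinite _)).trans (hB z)
  rw [Set.ncard_coe_finset] at this
  omega

lemma IsLPPartition.card_le_mul_card [Finite V] {P : Finset (Set V)}
    (hP : IsLPPartition G k P) {T : Finset V}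
    (hT : ∀ S ⊆ T, S.card = k + 1 → ∃ z, ↑S ⊆ closedNbhd G z) :
    T.card ≤ k * P.card := by
  classical
  have hcover : T ⊆ P.biUnion fun B => T.filter (· ∈ B) := fun x hx =>
    have ⟨B, ⟨hBP, hxB⟩, _⟩ := hP.2 x
    mem_biUnion.mpr ⟨B, hBP, mem_filter.mpr ⟨hx, hxB⟩⟩
  calc T.card ≤ ∑ B ∈ P, (T.filter (· ∈ B)).card := (card_le_card hcover).trans card_biUnion_le
    _ ≤ ∑ _B ∈ P, k := sum_le_sum fun B hB => (hP.1 B hB).card_filter_mem_le hT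
    _ = k * P.card := by rw [sum_const, smul_eq_mul, mul_comm]

lemma card_le_mul_chiLP [Fintype V] (hk : 1 ≤ k) {T : Finset V}
    (hT : ∀ S ⊆ T, S.card = k + 1 → ∃ z, ↑S ⊆ closedNbhd G z) :
    T.card ≤ k * chiLP G k := by
  obtain ⟨P, hP, hcard⟩ := exists_isLPPartition_card_eq_chiLP G hk
  exact hcard ▸ hP.card_le_mul_card hT

end LimitedPacking

section LexProd

variable {V W : Type*} {G : SimpleGraph V} {H : SimpleGraph W} {k : ℕ}

lemma mem_closedNbhd_lexProd_of_adj {x y : V × W} (h : G.Adj x.1 y.1) :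
    y ∈ closedNbhd (lexProd G H) x :=
  Or.inr (Or.inl h)

lemma mem_closedNbhd_lexProd {x y : V × W} (h : y ∈ closedNbhd (lexProd G H) x) :
    y.1 ∈ closedNbhd G x.1 := by
  rcases h with rfl | h | ⟨h, -⟩
  exacts [Set.mem_insert _ _, Or.inr h, Or.inl h.symm]

lemma IsLimitedPacking.lexProd_prod_singleton [Finite V] {B : Set V}
    (hB : IsLimitedPacking G k B) (H : SimpleGraph W) (w : W) :
    IsLimitedPacking (lexProd G H) k (B ×ˢ {w}) := by
  intro z
  have hsub : B ×ˢ {w} ∩ closedNbhd (lexProd G H) z ⊆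
      (fun b => (b, w)) '' (B ∩ closedNbhd G z.1) := by
    rintro ⟨b, _⟩ ⟨⟨hb, rfl⟩, hz⟩
    exact ⟨b, ⟨hb, mem_closedNbhd_lexProd hz⟩, rfl⟩
  calc (B ×ˢ {w} ∩ closedNbhd (lexProd G H) z).ncard
      ≤ ((fun b => (b, w)) '' (B ∩ closedNbhd G z.1)).ncard :=
        Set.ncard_le_ncard hsub (Set.toFinite _)
    _ = (B ∩ closedNbhd G z.1).ncard :=
        Set.ncard_image_of_injective _ fun _ _ h => congrArg Prod.fst h
    _ ≤ k := hB z.1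

lemma IsLPPartition.lexProd [Finite V] [Fintype W] {P : Finset (Set V)}
    (hP : IsLPPartition G k P) (H : SimpleGraph W) :
    IsLPPartition (lexProd G H) k ((P ×ˢ univ).image fun p => p.1 ×ˢ {p.2}) := by
  classical
  refine ⟨?_, fun ⟨v, w⟩ => ?_⟩
  · simp only [mem_image, mem_product, mem_univ, and_true, Prod.exists]
    rintro _ ⟨B, w, hB, rfl⟩
    exact (hP.1 B hB).lexProd_prod_singleton H w
  · obtain ⟨B, ⟨hBP, hvB⟩, huniq⟩ := hP.2 v
    refine ⟨B ×ˢ {w}, ⟨mem_image.mpr ⟨(B, w), by simpa using hBP, rfl⟩, hvB, rfl⟩, ?_⟩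
    rintro _ ⟨hC, hvC⟩
    obtain ⟨⟨B', w'⟩, hB', rfl⟩ := mem_image.mp hC
    obtain ⟨hvB', rfl⟩ := hvC
    rw [huniq B' ⟨(mem_product.mp hB').1, hvB'⟩]

lemma chiLP_lexProd_le_mul_card [Fintype V] [Fintype W] (G : SimpleGraph V)
    (H : SimpleGraph W) (hk : 1 ≤ k) :
    chiLP (lexProd G H) k ≤ chiLP G k * Fintype.card W := by
  classical
  obtain ⟨P, hP, hcard⟩ := exists_isLPPartition_card_eq_chiLP G hk
  calc chiLP (lexProd G H) k ≤ _ := chiLP_le_card (hP.lexProd H)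
    _ ≤ (P ×ˢ (univ : Finset W)).card := card_image_le
    _ = chiLP G k * Fintype.card W := by rw [card_product, card_univ, hcard]

/-- A vertex over `v` sees every vertex over `N(v)`, and a vertex over `N(v)` sees every vertex
over `v`: so if one of three vertices over `N[v]` is alone on its side, it sees the other two,
and otherwise a vertex over `v` or over `y` sees all three. -/
lemma exists_closedNbhd_lexProd_superset {v y : V} (hy : G.Adj v y) {S : Finset (V × W)}
    (hSv : ∀ x ∈ S, x.1 ∈ closedNbhd G v) (hS : S.card = 3) :
    ∃ z, ↑S ⊆ closedNbhd (lexProd G H) z := by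
  classical
  obtain ⟨a, b, c, -, -, -, rfl⟩ := card_eq_three.mp hS
  suffices ∃ z, a ∈ closedNbhd (lexProd G H) z ∧ b ∈ closedNbhd (lexProd G H) z ∧
      c ∈ closedNbhd (lexProd G H) z by
    simpa [Set.insert_subset_iff] using this
  have self : ∀ x, x ∈ closedNbhd (lexProd G H) x := fun x => Set.mem_insert x _
  have adj {z x : V × W} : G.Adj z.1 x.1 → x ∈ closedNbhd (lexProd G H) z :=
    mem_closedNbhd_lexProd_of_adj
  rcases hSv a (by simp) with ha | ha <;> rcases hSv b (by simp) with hb | hb <;>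
    rcases hSv c (by simp) with hc | hc
  · exact ⟨(y, a.2), adj (ha ▸ hy.symm), adj (hb ▸ hy.symm), adj (hc ▸ hy.symm)⟩
  · exact ⟨c, adj (ha ▸ hc.symm), adj (hb ▸ hc.symm), self c⟩
  · exact ⟨b, adj (ha ▸ hb.symm), self b, adj (hc ▸ hb.symm)⟩
  · exact ⟨a, self a, adj (ha ▸ hb), adj (ha ▸ hc)⟩
  · exact ⟨a, self a, adj (hb ▸ ha.symm), adj (hc ▸ ha.symm)⟩
  · exact ⟨b, adj (hb ▸ ha), self b, adj (hb ▸ hc)⟩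
  · exact ⟨c, adj (hc ▸ ha), adj (hc ▸ hb), self c⟩
  · exact ⟨(v, a.2), adj ha, adj hb, adj hc⟩

lemma degree_add_one_mul_card_le_two_mul_chiLP_lexProd [Fintype V] [DecidableRel G.Adj]
    [Fintype W] {v y : V} (hy : G.Adj v y) :
    (G.degree v + 1) * Fintype.card W ≤ 2 * chiLP (lexProd G H) 2 := by
  classical
  have hT : (insert v (G.neighborFinset v) ×ˢ univ : Finset (V × W)).card =
      (G.degree v + 1) * Fintype.card W := by
    rw [card_product, card_insert_of_notMem (G.notMem_neighborFinset_self v),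
      card_neighborFinset_eq_degree, card_univ]
  refine hT ▸ card_le_mul_chiLP one_le_two fun S hST hS => ?_
  refine exists_closedNbhd_lexProd_superset hy (fun x hx => ?_) hS
  simpa [closedNbhd] using (mem_product.mp (hST hx)).1

end LexProd

theorem chiLP_lexProd_bounds_general {V W : Type*} [Fintype V] [Fintype W]
    (G : SimpleGraph V) [DecidableRel G.Adj] (H : SimpleGraph W)
    (hδ : 1 ≤ G.minDegree) :
    ((G.maxDegree + 1) * Fintype.card W + 1) / 2 ≤ chiLP (lexProd G H) 2 ∧
      chiLP (lexProd G H) 2 ≤ chiLP G 2 * Fintype.card W := by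
  have : Nonempty V := by
    by_contra hV
    have : IsEmpty V := not_nonempty_iff.mp hV
    simp at hδ
  obtain ⟨v, hv⟩ := G.exists_maximal_degree_vertex
  obtain ⟨y, hy⟩ := (G.degree_pos_iff_exists_adj v).mp (hδ.trans (G.minDegree_le_degree v))
  have hlower := degree_add_one_mul_card_le_two_mul_chiLP_lexProd (H := H) hy
  rw [← hv] at hlower
  exact ⟨by omega, chiLP_lexProd_le_mul_card G H one_le_two⟩

/-- For a graph `G` with `δ(G) ≥ 1` and any graph `H`,
`⌈(Δ(G)+1)·|V(H)|/2⌉ ≤ χ_{×2}(G ∘ H) ≤ χ_{×2}(G)·|V(H)|`. -/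
theorem chiLP_lexProd_bounds {V W : Type*} [Fintype V] [Nonempty V] [Fintype W]
    (G : SimpleGraph V) [DecidableRel G.Adj] (H : SimpleGraph W)
    (hδ : 1 ≤ G.minDegree) :
    ((G.maxDegree + 1) * Fintype.card W + 1) / 2 ≤ chiLP (lexProd G H) 2 ∧
      chiLP (lexProd G H) 2 ≤ chiLP G 2 * Fintype.card W :=
  chiLP_lexProd_bounds_general G H hδ
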